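/- arXiv:1504.06840 — 4 statements merged into one kernel-verified Lean document; each statement's English description precedes it below -/
import Mathlib

section
/- For every integer r ≥ 2, the quantity η_r = 1/(log_r((1-λ_r)^{-1}) - 1) satisfies 0 < η_r ≤ 4/5, where λ_r ∈ (1/2,1) satisfies 1 - λ_r = e^{-rλ_r}. -/
/-- Bootstrap step: if `m ≤ R`, `0 ≤ a ≤ l` and `1 - l = exp (-(R*l))`,
then from a lower bound `b` on the Taylor sum of `exp (m*a)` we get `1 - 1/b ≤ l`. -/
lemma boot_step (R l m a b : ℝ) (hmR : m ≤ R) (hm : 0 ≤ m) (ha : 0 ≤ a) (hla : a ≤ l)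
    (heq : 1 - l = Real.exp (-(R * l))) (hb : 0 < b)
    (hbT : b ≤ ∑ i ∈ Finset.range 6, (m * a) ^ i / (Nat.factorial i : ℝ)) :
    1 - 1 / b ≤ l := by
  have hl0 : 0 ≤ l := le_trans ha hla
  have hma : m * a ≤ R * l := by
    calc m * a ≤ m * l := by nlinarith
    _ ≤ R * l := by nlinarith
  have hT : b ≤ Real.exp (m * a) :=
    le_trans hbT (Real.sum_le_exp_of_nonneg (by positivity) 6)
  have h1 : Real.exp (-(R * l)) ≤ Real.exp (-(m * a)) :=
    Real.exp_le_exp.mpr (by linarith)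
  have h2 : Real.exp (-(m * a)) ≤ 1 / b := by
    rw [Real.exp_neg, one_div]
    exact inv_anti₀ hb hT
  have h3 : 1 - l ≤ 1 / b := heq.le.trans (h1.trans h2)
  linarith

set_option maxHeartbeats 1600000 in
/-- For `r ≥ 2`, with `λ_r ∈ (1/2,1)` satisfying `1 - λ_r = exp (-r λ_r)`,
the quantity `η_r = 1 / (log_r ((1-λ_r)⁻¹) - 1)` satisfies `0 < η_r ≤ 4/5`. -/
theorem eta_r_bounds (r : ℕ) (hr : 2 ≤ r) (l : ℝ)
    (hl : l ∈ Set.Ioo (1 / 2 : ℝ) 1)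
    (heq : 1 - l = Real.exp (-(r : ℝ) * l)) :
    0 < 1 / (Real.logb r (1 - l)⁻¹ - 1) ∧
      1 / (Real.logb r (1 - l)⁻¹ - 1) ≤ 4 / 5 := by
  obtain ⟨hl1, hl2⟩ := hl
  set R : ℝ := (r : ℝ) with hRdef
  have hR : (2 : ℝ) ≤ R := by rw [hRdef]; exact_mod_cast hr
  have heq' : 1 - l = Real.exp (-(R * l)) := by rw [heq]; ring_nf
  -- bootstrap lower bounds on l
  have s1 : (1 : ℝ) - 1 / 2.716 ≤ l :=
    boot_step R l 2 (1/2) 2.716 hR (by norm_num) (by norm_num) hl1.le heq' (by norm_num)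
      (by norm_num [Finset.sum_range_succ, Nat.factorial])
  have a1 : (0.631 : ℝ) ≤ l := by linarith
  have s2 : (1 : ℝ) - 1 / 3.525 ≤ l :=
    boot_step R l 2 (0.631) 3.525 hR (by norm_num) (by norm_num) a1 heq' (by norm_num)
      (by norm_num [Finset.sum_range_succ, Nat.factorial])
  have a2 : (0.716 : ℝ) ≤ l := by linarith
  have s3 : (1 : ℝ) - 1 / 4.172 ≤ l :=
    boot_step R l 2 (0.716) 4.172 hR (by norm_num) (by norm_num) a2 heq' (by norm_num)
      (by norm_num [Finset.sum_range_succ, Nat.factorial])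
  have a3 : (0.76 : ℝ) ≤ l := by linarith
  have s4 : (1 : ℝ) - 1 / 4.55 ≤ l :=
    boot_step R l 2 (0.76) 4.55 hR (by norm_num) (by norm_num) a3 heq' (by norm_num)
      (by norm_num [Finset.sum_range_succ, Nat.factorial])
  have a4 : (0.78 : ℝ) ≤ l := by linarith
  have s5 : (1 : ℝ) - 1 / 4.733 ≤ l :=
    boot_step R l 2 (0.78) 4.733 hR (by norm_num) (by norm_num) a4 heq' (by norm_num)
      (by norm_num [Finset.sum_range_succ, Nat.factorial])
  have a5 : (0.788 : ℝ) ≤ l := by linarith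
  have s6 : (1 : ℝ) - 1 / 4.808 ≤ l :=
    boot_step R l 2 (0.788) 4.808 hR (by norm_num) (by norm_num) a5 heq' (by norm_num)
      (by norm_num [Finset.sum_range_succ, Nat.factorial])
  have a6 : (0.79 : ℝ) ≤ l := by linarith
  have hl79 : (0.79 : ℝ) ≤ l := a6
  -- key inequality : (9/4) * log R ≤ R * l
  have hkey : (9 / 4 : ℝ) * Real.log R ≤ R * l := by
    rcases eq_or_lt_of_le hr with h2 | h3
    · -- r = 2
      have hR2 : R = 2 := by rw [hRdef, ← h2]; norm_num
      have := Real.log_two_lt_d9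
      rw [hR2]
      nlinarith [Real.log_two_lt_d9]
    · -- r ≥ 3
      have hR3 : (3 : ℝ) ≤ R := by
        have h3' : (3 : ℕ) ≤ r := h3
        rw [hRdef]; exact_mod_cast h3'
      have s7 : (1 : ℝ) - 1 / 10.33 ≤ l :=
        boot_step R l 3 (0.79) 10.33 hR3 (by norm_num) (by norm_num) hl79 heq' (by norm_num)
          (by norm_num [Finset.sum_range_succ, Nat.factorial])
      have hl903 : (0.903 : ℝ) ≤ l := by linarith
      set t : ℝ := (4 / 9) * (R * l) with ht
      have htR : 0.4013 * R ≤ t := by rw [ht]; nlinarith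
      have ht0 : 0 ≤ t := by nlinarith
      have hTexp : 1 + t + t ^ 2 / 2 + t ^ 3 / 6 ≤ Real.exp t := by
        have := Real.sum_le_exp_of_nonneg ht0 4
        simp [Finset.sum_range_succ, Nat.factorial] at this
        linarith
      have hRt : R ≤ Real.exp t := by
        have hcR : (0:ℝ) ≤ 0.4013 * R := by linarith
        have hmono2 : (0.4013 * R) ^ 2 ≤ t ^ 2 := by nlinarith
        have hmono3 : (0.4013 * R) ^ 3 ≤ t ^ 3 := pow_le_pow_left₀ hcR htR 3
        have huni : R ≤ 1 + 0.4013 * R + (0.4013 * R) ^ 2 / 2 + (0.4013 * R) ^ 3 / 6 := by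
          nlinarith [sq_nonneg (R - 3),
            mul_nonneg (mul_nonneg (sub_nonneg.mpr hR3) (sub_nonneg.mpr hR3)) (sub_nonneg.mpr hR3)]
        linarith
      have := Real.log_le_log (by linarith) hRt
      rw [Real.log_exp] at this
      rw [ht] at this
      linarith
  -- convert to logb
  have h1l : 0 < 1 - l := by linarith
  have hlogR : 0 < Real.log R := Real.log_pos (by linarith)
  have hlogb : Real.logb R (1 - l)⁻¹ = R * l / Real.log R := by
    rw [Real.logb, Real.log_inv, heq', Real.log_exp]
    ring
  have hlogb94 : (9 / 4 : ℝ) ≤ Real.logb R (1 - l)⁻¹ := by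
    rw [hlogb, le_div_iff₀ hlogR]
    linarith
  have hD : (5 / 4 : ℝ) ≤ Real.logb R (1 - l)⁻¹ - 1 := by linarith
  constructor
  · positivity
  · rw [div_le_div_iff₀ (by linarith) (by norm_num)]
    linarith
end

section
/- For any integers m ≥ 0, r ≥ 1 and any real x ∈ [0,1], a Binomial(m, 1-(1-x)^r) random variable is stochastically dominated by a Binomial(rm, x) random variable; that is, for every integer t, P(Bin(m, 1-(1-x)^r) ≥ t) ≤ P(Bin(rm, x) ≥ t). -/
/-!
Write `T_N(p, t)` for the tail `P(Bin(N, p) ≥ t)`. Adding one trial gives the recursion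
`T_{N+1}(p, t) = (1 - p) T_N(p, t) + p T_N(p, t - 1)`. A block of `r` further trials of
probability `x` fails entirely with probability `(1 - x)^r` and otherwise adds at least one
success, so it raises the tail at least as much as a single trial of probability
`1 - (1 - x)^r`. Induction on `m` then compares `m` such single trials with `m` blocks.
-/

/-- `binomPr N k p` is the probability that a `Bin(N,p)` random variable equals `k`. -/
noncomputable def binomPr (N k : ℕ) (p : ℝ) : ℝ :=
  (N.choose k : ℝ) * p ^ k * (1 - p) ^ (N - k)

noncomputable def binomTail (N : ℕ) (p : ℝ) (t : ℕ) : ℝ :=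
  ∑ k ∈ Finset.Icc t N, binomPr N k p

open Finset

lemma binomPr_nonneg {p : ℝ} (hp : p ∈ Set.Icc (0 : ℝ) 1) (N k : ℕ) :
    0 ≤ binomPr N k p := by
  have := sub_nonneg.2 hp.2
  have := hp.1
  unfold binomPr; positivity

lemma binomPr_of_lt {N k : ℕ} (h : N < k) (p : ℝ) : binomPr N k p = 0 := by
  simp [binomPr, Nat.choose_eq_zero_of_lt h]

lemma binomPr_succ_succ (N k : ℕ) (p : ℝ) :
    binomPr (N + 1) (k + 1) p = p * binomPr N k p + (1 - p) * binomPr N (k + 1) p := by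
  rcases lt_or_ge k N with hk | hk
  · obtain ⟨j, rfl⟩ := Nat.exists_eq_add_of_lt hk
    simp only [binomPr, Nat.choose_succ_succ', Nat.cast_add,
      show k + j + 1 + 1 - (k + 1) = j + 1 by omega, show k + j + 1 - k = j + 1 by omega,
      show k + j + 1 - (k + 1) = j by omega]
    ring
  · rw [binomPr_of_lt (Nat.lt_succ_of_le hk)]
    rcases hk.eq_or_lt with rfl | hk
    · simp [binomPr, pow_succ, mul_comm]
    · simp [binomPr_of_lt hk, binomPr_of_lt (Nat.succ_lt_succ hk)]

lemma binomTail_zero (N : ℕ) (p : ℝ) : binomTail N p 0 = 1 := by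
  rw [binomTail, ← Nat.range_succ_eq_Icc_zero]
  calc ∑ k ∈ range (N + 1), binomPr N k p = (p + (1 - p)) ^ N := by
        rw [add_pow]; exact sum_congr rfl fun k _ => by rw [binomPr]; ring
    _ = 1 := by simp

lemma binomTail_succ (N : ℕ) (p : ℝ) (t : ℕ) :
    binomTail (N + 1) p t = (1 - p) * binomTail N p t + p * binomTail N p (t - 1) := by
  cases t with
  | zero => simp [binomTail_zero]
  | succ t =>
    have hshift (M : ℕ) :
        ∑ k ∈ Icc (t + 1) (N + 1), binomPr M k p = ∑ k ∈ Icc t N, binomPr M (k + 1) p := by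
      rw [← map_add_right_Icc, sum_map]; rfl
    have hdrop : ∑ k ∈ Icc (t + 1) (N + 1), binomPr N k p = binomTail N p (t + 1) := by
      refine (sum_subset (Icc_subset_Icc_right N.le_succ) fun k hk hk' => ?_).symm
      simp only [mem_Icc] at hk hk'
      exact binomPr_of_lt (by omega) p
    simp only [binomTail, hshift, binomPr_succ_succ, sum_add_distrib, ← mul_sum,
      Nat.add_sub_cancel]
    rw [← hshift, hdrop, binomTail, add_comm]

lemma binomTail_antitone {p : ℝ} (hp : p ∈ Set.Icc (0 : ℝ) 1) (N : ℕ) :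
    Antitone (binomTail N p) := fun _ _ hts =>
  sum_le_sum_of_subset_of_nonneg (Icc_subset_Icc_left hts) fun k _ _ => binomPr_nonneg hp N k

lemma binomTail_le_succ {p : ℝ} (hp : p ∈ Set.Icc (0 : ℝ) 1) (N t : ℕ) :
    binomTail N p t ≤ binomTail (N + 1) p t :=
  calc binomTail N p t = (1 - p) * binomTail N p t + p * binomTail N p t := by ring
    _ ≤ (1 - p) * binomTail N p t + p * binomTail N p (t - 1) := by
      gcongr
      · exact hp.1
      · exact binomTail_antitone hp N (t.sub_le 1)
    _ = binomTail (N + 1) p t := (binomTail_succ N p t).symm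

lemma binomTail_monotone {p : ℝ} (hp : p ∈ Set.Icc (0 : ℝ) 1) (t : ℕ) :
    Monotone fun N => binomTail N p t :=
  monotone_nat_of_le_succ fun N => binomTail_le_succ hp N t

lemma le_binomTail_add {p : ℝ} (hp : p ∈ Set.Icc (0 : ℝ) 1) (N r t : ℕ) :
    (1 - p) ^ r * binomTail N p t + (1 - (1 - p) ^ r) * binomTail N p (t - 1) ≤
      binomTail (N + r) p t := by
  induction r with
  | zero => simp
  | succ r ih =>
    have := hp.1
    have := sub_nonneg.2 hp.2
    calc (1 - p) ^ (r + 1) * binomTail N p t + (1 - (1 - p) ^ (r + 1)) * binomTail N p (t - 1)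
        = (1 - p) * ((1 - p) ^ r * binomTail N p t + (1 - (1 - p) ^ r) * binomTail N p (t - 1))
          + p * binomTail N p (t - 1) := by ring
      _ ≤ (1 - p) * binomTail (N + r) p t + p * binomTail (N + r) p (t - 1) := by
        gcongr
        exact binomTail_monotone hp _ (N.le_add_right r)
      _ = binomTail (N + r + 1) p t := (binomTail_succ _ p t).symm

lemma binomTail_le_binomTail_mul {p : ℝ} (hp : p ∈ Set.Icc (0 : ℝ) 1) (r m t : ℕ) :
    binomTail m (1 - (1 - p) ^ r) t ≤ binomTail (r * m) p t := by
  induction m generalizing t with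
  | zero => cases t <;> simp [binomTail, binomPr]
  | succ m ih =>
    have h1p := sub_nonneg.2 hp.2
    have : 0 ≤ 1 - (1 - p) ^ r := sub_nonneg.2 (pow_le_one₀ h1p (by linarith [hp.1]))
    calc binomTail (m + 1) (1 - (1 - p) ^ r) t
        = (1 - p) ^ r * binomTail m (1 - (1 - p) ^ r) t
          + (1 - (1 - p) ^ r) * binomTail m (1 - (1 - p) ^ r) (t - 1) := by
          rw [binomTail_succ, sub_sub_cancel]
      _ ≤ (1 - p) ^ r * binomTail (r * m) p t
          + (1 - (1 - p) ^ r) * binomTail (r * m) p (t - 1) := by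
          gcongr <;> apply ih
      _ ≤ binomTail (r * (m + 1)) p t := mul_add_one r m ▸ le_binomTail_add hp (r * m) r t

theorem binomial_coupling_domination_general (m r : ℕ) (x : ℝ)
    (hx : x ∈ Set.Icc (0 : ℝ) 1) (t : ℕ) :
    ∑ k ∈ Finset.Icc t m, binomPr m k (1 - (1 - x) ^ r) ≤
      ∑ k ∈ Finset.Icc t (r * m), binomPr (r * m) k x :=
  binomTail_le_binomTail_mul hx r m t

/-- `Bin(m, 1-(1-x)^r)` is stochastically dominated by `Bin(r*m, x)`:
for every `t`, `P(Bin(m, 1-(1-x)^r) ≥ t) ≤ P(Bin(rm, x) ≥ t)`. -/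
theorem binomial_coupling_domination (m r : ℕ) (hr : 1 ≤ r) (x : ℝ)
    (hx : x ∈ Set.Icc (0 : ℝ) 1) (t : ℕ) :
    ∑ k ∈ Finset.Icc t m, binomPr m k (1 - (1 - x) ^ r) ≤
      ∑ k ∈ Finset.Icc t (r * m), binomPr (r * m) k x :=
  binomial_coupling_domination_general m r x hx t
end

section
/- Let D be a finite strongly connected r-out-regular directed multigraph (every vertex has out-degree exactly r) that is ergodic (i.e., the simple random walk on D, which at each step follows a uniformly chosen out-edge, has a unique stationary distribution π). If the diameter of D is at most d, then for every vertex v, π(v) ≥ 1/(1 + d·r^d). In particular π_min ≥ 1/(1 + d·r^d). -/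
open Finset

/-- There is a directed path of length `k` from `u` to `v` in the `r`-out
multigraph given by the out-edge function `f`. -/
def HasPath {V : Type*} {r : ℕ} (f : V → Fin r → V) (u v : V) (k : ℕ) : Prop :=
  ∃ w : ℕ → V, w 0 = u ∧ w k = v ∧ ∀ i < k, ∃ j, f (w i) j = w (i + 1)

/-- `k`-step transition probabilities of the walk. -/
noncomputable def Pk {V : Type*} [Fintype V] [DecidableEq V] (r : ℕ) (f : V → Fin r → V) :
    ℕ → V → V → ℝ
  | 0 => fun u v => if u = v then 1 else 0
  | (k+1) => fun u v => ∑ w, Pk r f k u w * ((univ.filter (fun j => f w j = v)).card : ℝ) / r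

lemma Pk_nonneg {V : Type*} [Fintype V] [DecidableEq V] (r : ℕ) (f : V → Fin r → V)
    (k : ℕ) (u v : V) : 0 ≤ Pk r f k u v := by
  induction k generalizing u v with
  | zero => simp only [Pk]; split <;> norm_num
  | succ k ih =>
    simp only [Pk]
    apply Finset.sum_nonneg
    intro w _
    have := ih u w
    positivity

lemma stat_iter {V : Type*} [Fintype V] [DecidableEq V]
    (r : ℕ) (f : V → Fin r → V) (π : V → ℝ)
    (hstat : ∀ v, π v = ∑ u, π u * ((univ.filter (fun j => f u j = v)).card : ℝ) / r)
    (k : ℕ) (v : V) : π v = ∑ u, π u * Pk r f k u v := by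
  induction k generalizing v with
  | zero =>
      simp only [Pk]
      rw [Finset.sum_congr rfl (fun u _ => by rw [mul_ite, mul_one, mul_zero])]
      rw [Finset.sum_ite_eq' univ v π]
      simp
  | succ k ih =>
      calc π v = ∑ w, π w * ((univ.filter (fun j => f w j = v)).card : ℝ) / r := hstat v
      _ = ∑ w, (∑ u, π u * Pk r f k u w) * ((univ.filter (fun j => f w j = v)).card : ℝ) / r := by
          refine Finset.sum_congr rfl fun w _ => by rw [← ih w]
      _ = ∑ w, ∑ u, π u * (Pk r f k u w * ((univ.filter (fun j => f w j = v)).card : ℝ) / r) := by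
          refine Finset.sum_congr rfl fun w _ => ?_
          rw [Finset.sum_mul, Finset.sum_div]
          exact Finset.sum_congr rfl fun u _ => by ring
      _ = ∑ u, ∑ w, π u * (Pk r f k u w * ((univ.filter (fun j => f w j = v)).card : ℝ) / r) :=
          Finset.sum_comm
      _ = ∑ u, π u * Pk r f (k+1) u v := by
          refine Finset.sum_congr rfl fun u _ => ?_
          rw [← Finset.mul_sum]
          rfl

lemma Pk_of_path {V : Type*} [Fintype V] [DecidableEq V]
    (r : ℕ) (hr : 1 ≤ r) (f : V → Fin r → V) (k : ℕ) (u v : V)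
    (h : HasPath f u v k) : ((r : ℝ))⁻¹ ^ k ≤ Pk r f k u v := by
  have hr0 : (0:ℝ) < r := by exact_mod_cast Nat.lt_of_lt_of_le Nat.zero_lt_one hr
  induction k generalizing v with
  | zero =>
      obtain ⟨w, h0, hk, _⟩ := h
      have : u = v := by rw [← h0, hk]
      simp [Pk, this]
  | succ k ih =>
      obtain ⟨w, h0, hk, hstep⟩ := h
      have hpath : HasPath f u (w k) k :=
        ⟨w, h0, rfl, fun i hi => hstep i (Nat.lt_succ_of_lt hi)⟩
      have hPk : ((r : ℝ))⁻¹ ^ k ≤ Pk r f k u (w k) := ih (w k) hpath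
      have hedge : (1 : ℝ) ≤ ((univ.filter (fun j => f (w k) j = v)).card : ℝ) := by
        obtain ⟨j, hj⟩ := hstep k (Nat.lt_succ_self k)
        rw [hk] at hj
        have : j ∈ univ.filter (fun j => f (w k) j = v) := by
          simp [hj]
        have hcard : 1 ≤ (univ.filter (fun j => f (w k) j = v)).card :=
          Finset.card_pos.mpr ⟨j, this⟩
        exact_mod_cast hcard
      have hterm : ((r : ℝ))⁻¹ ^ (k+1) ≤
          Pk r f k u (w k) * ((univ.filter (fun j => f (w k) j = v)).card : ℝ) / r := by
        have h1 : ((r : ℝ))⁻¹ ^ (k+1) = ((r : ℝ))⁻¹ ^ k * 1 / r := by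
          rw [pow_succ, mul_one]
          field_simp
        have hmul : ((r : ℝ))⁻¹ ^ k * 1 ≤
            Pk r f k u (w k) * ((univ.filter (fun j => f (w k) j = v)).card : ℝ) :=
          mul_le_mul hPk hedge zero_le_one (le_trans (by positivity) hPk)
        rw [h1, div_eq_mul_inv, div_eq_mul_inv]
        exact mul_le_mul_of_nonneg_right hmul (by positivity)
      calc ((r : ℝ))⁻¹ ^ (k+1)
          ≤ Pk r f k u (w k) * ((univ.filter (fun j => f (w k) j = v)).card : ℝ) / r := hterm
        _ ≤ ∑ w', Pk r f k u w' * ((univ.filter (fun j => f w' j = v)).card : ℝ) / r := by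
            apply Finset.single_le_sum (f := fun w' =>
              Pk r f k u w' * ((univ.filter (fun j => f w' j = v)).card : ℝ) / r)
              (fun w' _ => ?_) (Finset.mem_univ (w k))
            have := Pk_nonneg r f k u w'
            positivity
        _ = Pk r f (k+1) u v := rfl

/-- Let `D` be a finite strongly connected `r`-out-regular directed multigraph
(out-edges given by `f : V → Fin r → V`) which is ergodic, i.e. the simple random
walk (following a uniformly chosen out-edge) has a unique stationary distribution
`π`.  If the diameter of `D` is at most `d`, then every vertex `v` satisfies
`π v ≥ 1 / (1 + d r^d)`; in particular `π_min ≥ 1 / (1 + d r^d)`. -/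
theorem stationary_min_of_diameter {V : Type*} [Fintype V] [DecidableEq V] [Nonempty V]
    (r : ℕ) (hr : 1 ≤ r) (f : V → Fin r → V) (π : V → ℝ)
    (hpos : ∀ v, 0 ≤ π v) (hsum : ∑ v, π v = 1)
    (hstat : ∀ v, π v = ∑ u, π u * ((univ.filter (fun j => f u j = v)).card : ℝ) / r)
    (huniq : ∀ π' : V → ℝ, (∀ v, 0 ≤ π' v) → ∑ v, π' v = 1 →
      (∀ v, π' v = ∑ u, π' u * ((univ.filter (fun j => f u j = v)).card : ℝ) / r) →
      π' = π)
    (d : ℕ) (hdiam : ∀ u v : V, ∃ k ≤ d, HasPath f u v k) :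
    ∀ v : V, 1 / (1 + (d : ℝ) * (r : ℝ) ^ d) ≤ π v := by
  intro v
  have hr0 : (0:ℝ) < r := by exact_mod_cast Nat.lt_of_lt_of_le Nat.zero_lt_one hr
  have hr1 : (1:ℝ) ≤ (r:ℝ) := by exact_mod_cast hr
  set g : V → ℝ := fun u => ∑ k ∈ Finset.range (d+1), Pk r f k u v with hg
  -- g u ≥ r⁻ᵈ for all u
  have hglb : ∀ u, ((r : ℝ))⁻¹ ^ d ≤ g u := by
    intro u
    obtain ⟨k, hkd, hpath⟩ := hdiam u v
    have h1 : ((r : ℝ))⁻¹ ^ d ≤ ((r : ℝ))⁻¹ ^ k := by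
      apply pow_le_pow_of_le_one (by positivity) _ hkd
      rw [inv_le_one_iff₀]; right; exact hr1
    refine le_trans (le_trans h1 (Pk_of_path r hr f k u v hpath)) ?_
    exact Finset.single_le_sum (fun i _ => Pk_nonneg r f i u v)
      (Finset.mem_range.mpr (Nat.lt_succ_of_le hkd))
  -- g v ≥ 1
  have hgv : (1:ℝ) ≤ g v := by
    have h0 : Pk r f 0 v v = 1 := by simp [Pk]
    calc (1:ℝ) = Pk r f 0 v v := h0.symm
      _ ≤ g v := Finset.single_le_sum (fun i _ => Pk_nonneg r f i v v)
          (Finset.mem_range.mpr (Nat.succ_pos d))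
  -- (d+1) π v = ∑ u, π u * g u
  have hkey : ((d:ℝ) + 1) * π v = ∑ u, π u * g u := by
    have : ∑ u, π u * g u = ∑ k ∈ Finset.range (d+1), ∑ u, π u * Pk r f k u v := by
      rw [Finset.sum_comm]
      exact Finset.sum_congr rfl fun u _ => by rw [hg, Finset.mul_sum]
    rw [this]
    rw [Finset.sum_congr rfl fun k _ => (stat_iter r f π hstat k v).symm]
    rw [Finset.sum_const, Finset.card_range]
    push_cast
    ring
  -- lower bound the sum
  have hsplit : ∑ u, π u * g u =
      π v * g v + ∑ u ∈ univ.erase v, π u * g u := by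
    rw [← Finset.add_sum_erase univ (fun u => π u * g u) (Finset.mem_univ v)]
  have hrest : ∑ u ∈ univ.erase v, π u = 1 - π v := by
    have := Finset.add_sum_erase univ π (Finset.mem_univ v)
    linarith [this, hsum]
  have hrestlb : (1 - π v) * ((r : ℝ))⁻¹ ^ d ≤ ∑ u ∈ univ.erase v, π u * g u := by
    calc (1 - π v) * ((r : ℝ))⁻¹ ^ d = ∑ u ∈ univ.erase v, π u * ((r : ℝ))⁻¹ ^ d := by
          rw [← Finset.sum_mul, hrest]
      _ ≤ ∑ u ∈ univ.erase v, π u * g u :=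
          Finset.sum_le_sum fun u _ => mul_le_mul_of_nonneg_left (hglb u) (hpos u)
  have hmain : ((d:ℝ) + 1) * π v ≥ π v + (1 - π v) * ((r : ℝ))⁻¹ ^ d := by
    rw [hkey, hsplit]
    have h1 : π v * 1 ≤ π v * g v := mul_le_mul_of_nonneg_left hgv (hpos v)
    linarith
  -- final algebra
  have hrd : (0:ℝ) < (r:ℝ) ^ d := by positivity
  have hrd1 : (1:ℝ) ≤ (r:ℝ) ^ d := one_le_pow₀ hr1
  have hinv : ((r : ℝ))⁻¹ ^ d * (r:ℝ) ^ d = 1 := by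
    rw [← mul_pow, inv_mul_cancel₀ (ne_of_gt hr0), one_pow]
  have hpivlb : π v * (1 + (d:ℝ) * (r:ℝ) ^ d) ≥ 1 := by
    nlinarith [hmain, hpos v, hrd, hinv, hrd1]
  rw [div_le_iff₀ (by positivity)]
  linarith [hpivlb]
end

section
/- Let X be a binomial random variable Bin(n - p, 1 - (1 - q/(n-p+q))^r) with r ≥ 2 an integer and integers q, p satisfying 0 < q ≤ p ≤ n^{0.999}. Then for all sufficiently large n, E[X] > 2rq/3. -/
/-- Second-order upper bound `(1-x)^r ≤ 1 - rx + r(r-1)/2 x²` for `x ∈ [0,1]`. -/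
lemma pow_one_sub_le_aux (x : ℝ) (hx0 : 0 ≤ x) (hx1 : x ≤ 1) :
    ∀ r : ℕ, (1 - x) ^ r ≤ 1 - r * x + ((r : ℝ) * ((r : ℝ) - 1)) / 2 * x ^ 2 := by
  intro r
  induction r with
  | zero => norm_num
  | succ r ih =>
    have h1 : (0:ℝ) ≤ 1 - x := by linarith
    have hc : (0:ℝ) ≤ (r:ℝ) * ((r:ℝ) - 1) := by
      rcases Nat.eq_zero_or_pos r with h | h
      · simp [h]
      · have : (1:ℝ) ≤ (r:ℝ) := by exact_mod_cast h
        nlinarith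
    have h2 : (1 - x) ^ (r+1) = (1 - x) * (1 - x) ^ r := by ring
    push_cast
    nlinarith [mul_le_mul_of_nonneg_left ih h1, pow_nonneg h1 r,
      mul_nonneg (mul_nonneg hc hx0) (sq_nonneg x), sq_nonneg x]

set_option maxHeartbeats 1000000 in
/-- For `r ≥ 2`, and `X ~ Bin(n - p, 1 - (1 - q/(n-p+q))^r)` with integers
`0 < q ≤ p ≤ n^{0.999}`: for all sufficiently large `n`, `E[X] > 2rq/3`.
(The expectation is written out explicitly as `(n-p)(1 - (1 - q/(n-p+q))^r)`.) -/
theorem binomial_mean_lower (r : ℕ) (hr : 2 ≤ r) :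
    ∃ N : ℕ, ∀ n : ℕ, N ≤ n → ∀ p q : ℕ, 0 < q → q ≤ p →
      (p : ℝ) ≤ (n : ℝ) ^ (0.999 : ℝ) →
      2 * (r : ℝ) * (q : ℝ) / 3 <
        ((n : ℝ) - (p : ℝ)) *
          (1 - (1 - (q : ℝ) / ((n : ℝ) - (p : ℝ) + (q : ℝ))) ^ r) := by
  refine ⟨(6*r+1)^1000, ?_⟩
  intro n hn p q hq hqp hp
  have hr2 : (2:ℝ) ≤ (r:ℝ) := by exact_mod_cast hr
  have hq1 : (1:ℝ) ≤ (q:ℝ) := by exact_mod_cast hq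
  have hqp' : (q:ℝ) ≤ (p:ℝ) := by exact_mod_cast hqp
  have hK : (13:ℝ) ≤ ((6*r+1 : ℕ) : ℝ) := by
    push_cast; linarith
  have hn1 : 1 ≤ n := le_trans (Nat.one_le_pow _ _ (by omega)) hn
  have hn0 : (0:ℝ) < (n:ℝ) := by exact_mod_cast hn1
  -- key: (6r+1) * n^{0.999} ≤ n
  have hKn : ((6*r+1 : ℕ) : ℝ) * (n:ℝ) ^ (0.999:ℝ) ≤ (n:ℝ) := by
    have hK0 : (0:ℝ) ≤ ((6*r+1 : ℕ) : ℝ) := by positivity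
    have h3 : (((6*r+1)^1000 : ℕ) : ℝ) ≤ (n:ℝ) := by exact_mod_cast hn
    have h1 : ((6*r+1 : ℕ) : ℝ) ≤ (n:ℝ) ^ (0.001:ℝ) := by
      have heq : ((6*r+1 : ℕ) : ℝ) = ((((6*r+1 : ℕ)) : ℝ) ^ (1000:ℕ)) ^ (0.001:ℝ) := by
        rw [← Real.rpow_natCast ((6*r+1 : ℕ) : ℝ) 1000, ← Real.rpow_mul hK0]
        norm_num
      rw [heq]
      apply Real.rpow_le_rpow (by positivity) _ (by norm_num)
      push_cast at h3 ⊢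
      exact h3
    have h2 : (n:ℝ) ^ (0.001:ℝ) * (n:ℝ) ^ (0.999:ℝ) = (n:ℝ) := by
      rw [← Real.rpow_add hn0]
      norm_num
    calc ((6*r+1 : ℕ) : ℝ) * (n:ℝ) ^ (0.999:ℝ)
        ≤ (n:ℝ) ^ (0.001:ℝ) * (n:ℝ) ^ (0.999:ℝ) :=
          mul_le_mul_of_nonneg_right h1 (Real.rpow_nonneg hn0.le _)
      _ = (n:ℝ) := h2
  have hKp : ((6*r+1 : ℕ) : ℝ) * (p:ℝ) ≤ (n:ℝ) :=
    le_trans (mul_le_mul_of_nonneg_left hp (by positivity)) hKn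
  push_cast at hKp hK
  clear hn hp hKn
  set m : ℝ := (n:ℝ) - (p:ℝ) with hmdef
  have hm : 0 < m := by nlinarith
  have hs : 0 < m + (q:ℝ) := by linarith
  set x : ℝ := (q:ℝ) / (m + (q:ℝ)) with hxdef
  have hx0 : 0 ≤ x := by positivity
  -- 6 r q ≤ m + q
  have h6rq : 6 * (r:ℝ) * (q:ℝ) ≤ m + (q:ℝ) := by nlinarith
  have hx6 : 6 * (r:ℝ) * x ≤ 1 := by
    rw [hxdef]
    calc 6 * (r:ℝ) * ((q:ℝ)/(m+(q:ℝ))) = (6*(r:ℝ)*(q:ℝ))/(m+(q:ℝ)) := by ring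
      _ ≤ 1 := by rw [div_le_one hs]; linarith
  have hx1 : x ≤ 1 := by nlinarith
  have hmx : m * x = (q:ℝ) * (1 - x) := by
    rw [hxdef]
    field_simp
    ring
  have hpow := pow_one_sub_le_aux x hx0 hx1 r
  have key : (r:ℝ) * (q:ℝ) * (1 - x) * (1 - ((r:ℝ)-1)/2 * x) ≤ m * (1 - (1-x)^r) := by
    have h1 : m * ((r:ℝ)*x - (r:ℝ)*((r:ℝ)-1)/2 * x^2) ≤ m * (1 - (1-x)^r) := by
      apply mul_le_mul_of_nonneg_left _ hm.le
      linarith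
    have h2 : m * ((r:ℝ)*x - (r:ℝ)*((r:ℝ)-1)/2 * x^2)
        = (r:ℝ) * (m * x) * (1 - ((r:ℝ)-1)/2 * x) := by ring
    rw [h2, hmx] at h1
    calc (r:ℝ) * (q:ℝ) * (1 - x) * (1 - ((r:ℝ)-1)/2 * x)
        = (r:ℝ) * ((q:ℝ) * (1 - x)) * (1 - ((r:ℝ)-1)/2 * x) := by ring
      _ ≤ m * (1 - (1-x)^r) := h1
  have ha : (11:ℝ)/12 ≤ 1 - x := by nlinarith
  have hb : (11:ℝ)/12 ≤ 1 - ((r:ℝ)-1)/2 * x := by nlinarith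
  have hc : (121:ℝ)/144 ≤ (1 - x) * (1 - ((r:ℝ)-1)/2 * x) := by nlinarith
  have hrq : (2:ℝ) ≤ (r:ℝ) * (q:ℝ) := by
    calc (2:ℝ) = 2 * 1 := by norm_num
      _ ≤ (r:ℝ) * (q:ℝ) := mul_le_mul hr2 hq1 (by norm_num) (by linarith)
  have hfin : 2 * (r:ℝ) * (q:ℝ) / 3 < (r:ℝ) * (q:ℝ) * (1 - x) * (1 - ((r:ℝ)-1)/2 * x) := by
    nlinarith [mul_le_mul_of_nonneg_left hc (by linarith : (0:ℝ) ≤ (r:ℝ)*(q:ℝ))]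
  linarith [key, hfin]
end
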